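/- In the graph G_{q,k} (q ≥ 1, k ≥ 1), the bridge edge {t, r_1} satisfies EMD_{dist}(P_t, P_{r_1}) ≥ 5/4 + (3/2)·(q+1)/(q+3), and consequently its Ollivier–Ricci curvature satisfies C_{G_{q,k}}({t,r_1}) ≤ −1/4 − (3/2)·(q+1)/(q+3). (This is the bound Λ₅ ≤ −1/4 − (3/2)·(√n+1)/(√n+3) of claim (v) in the proof of the paper's Theorem 1, with q playing the role of √n.) -/

import Mathlib

/-- Earth Mover's Distance between two distributions `μ ν : V → ℝ` w.r.t. a
cost function `d : V → V → ℝ`: the minimum (infimum) of the total transport cost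
over all feasible transport plans. -/
noncomputable def EMD {V : Type} (d : V → V → ℝ) (μ ν : V → ℝ) : ℝ :=
  sInf { c : ℝ | ∃ z : V → V → ℝ,
    (∀ u v, 0 ≤ z u v) ∧ (∀ u, ∑ᶠ v, z u v = μ u) ∧ (∀ v, ∑ᶠ u, z u v = ν v) ∧
    c = ∑ᶠ u, ∑ᶠ v, d u v * z u v }

/-- The degree of a vertex: the number of its neighbours. -/
noncomputable def degC {V : Type} (G : SimpleGraph V) (u : V) : ℕ :=
  Nat.card {x | G.Adj u x}

open Classical in
/-- The uniform probability distribution on the closed neighbourhood of `u`. -/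
noncomputable def Pdist {V : Type} (G : SimpleGraph V) (u : V) : V → ℝ :=
  fun w => if w = u ∨ G.Adj u w then ((degC G u : ℝ) + 1)⁻¹ else 0

/-- The graph distance, as a real-valued cost function. -/
noncomputable def gdist {V : Type} (G : SimpleGraph V) : V → V → ℝ :=
  fun a b => (G.dist a b : ℝ)

/-- The total variation distance between the closed-neighbourhood distributions of `u`, `v`. -/
noncomputable def tvd {V : Type} (G : SimpleGraph V) (u v : V) : ℝ :=
  (1 / 2) * ∑ᶠ w, |Pdist G u w - Pdist G v w|

/-- The Ollivier–Ricci curvature of the (ordered) pair `u v`. -/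
noncomputable def ricci {V : Type} (G : SimpleGraph V) (u v : V) : ℝ :=
  1 - EMD (gdist G) (Pdist G u) (Pdist G v)


/-- Vertices of the complete 10-ary tree of depth `k`: lists over `Fin 10` of length
at most `k`, recording the (reversed) path from the root `[]`. -/
def TreeVert (k : ℕ) : Type := { l : List (Fin 10) // l.length ≤ k }

instance (k : ℕ) : DecidableEq (TreeVert k) :=
  inferInstanceAs (DecidableEq { l : List (Fin 10) // l.length ≤ k })

instance (k : ℕ) : Fintype (TreeVert k) :=
  Fintype.ofSurjective
    (fun x : Σ j : Fin (k + 1), List.Vector (Fin 10) j =>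
      (⟨x.2.1, by have h1 := x.2.2; have h2 := x.1.isLt; omega⟩ : TreeVert k))
    (fun y => ⟨⟨⟨y.1.length, Nat.lt_succ_of_le y.2⟩, ⟨y.1, rfl⟩⟩, Subtype.ext rfl⟩)

/-- The root of the tree. -/
def treeRoot (k : ℕ) : TreeVert k := ⟨[], by simp⟩

/-- The parent of a tree vertex (the root is mapped to itself). -/
def treeParent {k : ℕ} (x : TreeVert k) : TreeVert k :=
  ⟨x.1.tail, by have h1 := x.2; have h2 := List.length_tail (l := x.1); omega⟩

/-- The vertex set of the graph `G_{q,k}`: the two special vertices `s`, `t`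
(encoded as `Fin 2`), the vertices `p_1, …, p_q`, and the tree vertices. -/
abbrev GVert (q k : ℕ) : Type := (Fin 2 ⊕ Fin q) ⊕ TreeVert k

def vS (q k : ℕ) : GVert q k := Sum.inl (Sum.inl 0)
def vT (q k : ℕ) : GVert q k := Sum.inl (Sum.inl 1)
def vP (q k : ℕ) (i : Fin q) : GVert q k := Sum.inl (Sum.inr i)
def vTr (q k : ℕ) (x : TreeVert k) : GVert q k := Sum.inr x

/-- Base adjacency relation generating the edges of `G_{q,k}`: the edge `{s,t}`,
the edges `{p_i, s}` and `{p_i, t}`, the bridge `{t, r_1}` to the root of the tree,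
and the parent-child tree edges. -/
def gadjBase (q k : ℕ) : GVert q k → GVert q k → Prop := fun x y =>
  (x = vS q k ∧ y = vT q k) ∨
  (∃ i : Fin q, x = vP q k i ∧ (y = vS q k ∨ y = vT q k)) ∨
  (x = vT q k ∧ y = vTr q k (treeRoot k)) ∨
  (∃ u v : TreeVert k, x = vTr q k u ∧ y = vTr q k v ∧ ∃ a : Fin 10, u.1 = a :: v.1)

/-- The graph `G_{q,k}` from the proof of the paper's Theorem 1
(with `q` playing the role of `√n`). -/
def Gqk (q k : ℕ) : SimpleGraph (GVert q k) := SimpleGraph.fromRel (gadjBase q k)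

/-- `N_k = (10^(k+1) - 1)/9`, the number of vertices of the complete 10-ary tree of depth `k`. -/
def Nk (k : ℕ) : ℕ := (10 ^ (k + 1) - 1) / 9


/-!
Weak Kantorovich duality: for every `f` that changes by at most `1` along edges, the difference
of the means of `f` under `P_t` and `P_{r_1}` is at most `EMD(P_t, P_{r_1})`. Take `f = 3` on `s`
and on the `p_i`, `f = 2` on `t`, `f = 1` on `r_1` and `f = 0` on the rest of the tree. Since
`deg t = q + 2` and `deg r_1 = 11`, the two means are `(3q + 6)/(q + 3)` and `(2 + 1)/12 = 1/4`,
and their difference is `5/4 + (3/2)(q + 1)/(q + 3)`.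
-/

open Finset

theorem sum_mul_sub_sum_mul_le_EMD {V : Type} [Fintype V] {d : V → V → ℝ} {μ ν : V → ℝ}
    (f : V → ℝ) (hf : ∀ u v, f u - f v ≤ d u v) (hμ : ∀ u, 0 ≤ μ u) (hν : ∀ v, 0 ≤ ν v)
    (hμ1 : ∑ u, μ u = 1) (hν1 : ∑ v, ν v = 1) :
    ∑ u, f u * μ u - ∑ v, f v * ν v ≤ EMD d μ ν := by
  simp only [EMD, finsum_eq_sum_of_fintype]
  apply le_csInf
  · exact ⟨_, fun u v => μ u * ν v, fun u v => mul_nonneg (hμ u) (hν v),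
      fun u => by rw [← mul_sum, hν1, mul_one], fun v => by rw [← sum_mul, hμ1, one_mul], rfl⟩
  · rintro c ⟨z, hz, hzμ, hzν, rfl⟩
    calc ∑ u, f u * μ u - ∑ v, f v * ν v
        = ∑ u, ∑ v, (f u - f v) * z u v := by
          simp_rw [← hzμ, ← hzν, mul_sum, sub_mul, sum_sub_distrib]
          rw [sum_comm (f := fun v u => f v * z u v)]
      _ ≤ ∑ u, ∑ v, d u v * z u v := by
          gcongr with u _ v _
          · exact hz u v
          · exact hf u v

section Pdist
variable {V : Type} {G : SimpleGraph V}

theorem degC_eq_degree [Fintype V] [DecidableRel G.Adj] (u : V) : degC G u = G.degree u := by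
  rw [degC, ← SimpleGraph.card_neighborSet_eq_degree, Nat.card_eq_fintype_card]
  rfl

theorem sum_mul_Pdist [Fintype V] [DecidableEq V] [DecidableRel G.Adj] (f : V → ℝ) (u : V) :
    ∑ w, f w * Pdist G u w = (f u + ∑ w ∈ G.neighborFinset u, f w) / (G.degree u + 1) := by
  have hterm : ∀ w, f w * Pdist G u w =
      if w ∈ insert u (G.neighborFinset u) then f w / (G.degree u + 1) else 0 := by
    intro w
    simp [Pdist, degC_eq_degree, div_eq_mul_inv]
  simp_rw [hterm]
  rw [sum_ite_mem, univ_inter, sum_insert (by simp), add_div, sum_div]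

theorem sum_Pdist [Fintype V] (u : V) : ∑ w, Pdist G u w = 1 := by
  classical
  have h := sum_mul_Pdist (G := G) 1 u
  simp only [Pi.one_apply, one_mul, sum_const, SimpleGraph.card_neighborFinset_eq_degree,
    nsmul_eq_mul, mul_one] at h
  rw [h, add_comm, div_self (by positivity)]

theorem Pdist_nonneg (u w : V) : 0 ≤ Pdist G u w := by
  unfold Pdist
  split_ifs <;> positivity

end Pdist

namespace SimpleGraph
variable {V : Type} {G : SimpleGraph V}

theorem Reachable.sub_le_dist {f : V → ℝ} (hf : ∀ ⦃u v⦄, G.Adj u v → f u - f v ≤ 1)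
    {u v : V} (h : G.Reachable u v) : f u - f v ≤ G.dist u v := by
  obtain ⟨p, hp⟩ := h.exists_walk_length_eq_dist
  rw [← hp]
  clear hp h
  induction p with
  | nil => simp
  | cons hadj _ ih =>
    rw [Walk.length_cons, Nat.cast_succ]
    linarith [hf hadj]

theorem Connected.sum_mul_Pdist_sub_le_EMD [Fintype V] (hG : G.Connected) {f : V → ℝ}
    (hf : ∀ ⦃u v⦄, G.Adj u v → f u - f v ≤ 1) (u v : V) :
    ∑ w, f w * Pdist G u w - ∑ w, f w * Pdist G v w ≤ EMD (gdist G) (Pdist G u) (Pdist G v) :=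
  sum_mul_sub_sum_mul_le_EMD f (fun _ _ => (hG.preconnected _ _).sub_le_dist hf)
    (Pdist_nonneg u) (Pdist_nonneg v) (sum_Pdist u) (sum_Pdist v)

end SimpleGraph

theorem TreeVert.ext_iff {k : ℕ} {x y : TreeVert k} : x = y ↔ x.1 = y.1 := Subtype.ext_iff

namespace Gqk
variable {q k : ℕ}

@[simp] theorem treeRoot_val : (treeRoot k).1 = [] := rfl

def treeChild (hk : 1 ≤ k) (a : Fin 10) : TreeVert k := ⟨[a], hk⟩

@[simp] theorem treeChild_val (hk : 1 ≤ k) (a : Fin 10) : (treeChild hk a).1 = [a] := rfl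

theorem adj_vT_iff (x : GVert q k) :
    (Gqk q k).Adj (vT q k) x ↔ x = vS q k ∨ x = vTr q k (treeRoot k) ∨ ∃ i, x = vP q k i := by
  rcases x with (i | i) | x
  · fin_cases i <;> simp [Gqk, gadjBase, vS, vT, vP, vTr]
  all_goals simp [Gqk, gadjBase, vS, vT, vP, vTr]

theorem adj_vTr_vTr {x y : TreeVert k} :
    (Gqk q k).Adj (vTr q k x) (vTr q k y) ↔ (∃ a, x.1 = a :: y.1) ∨ ∃ a, y.1 = a :: x.1 := by
  suffices ((∃ a, x.1 = a :: y.1) ∨ ∃ a, y.1 = a :: x.1) → x ≠ y by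
    simpa [Gqk, gadjBase, vS, vT, vP, vTr]
  rintro (⟨a, h⟩ | ⟨a, h⟩) rfl <;> simp at h

theorem adj_root_iff (hk : 1 ≤ k) (x : GVert q k) :
    (Gqk q k).Adj (vTr q k (treeRoot k)) x ↔
      x = vT q k ∨ ∃ a, x = vTr q k (treeChild hk a) := by
  rcases x with (i | i) | x
  · fin_cases i <;> simp [Gqk, gadjBase, vS, vT, vP, vTr]
  · simp [Gqk, gadjBase, vS, vT, vP, vTr]
  · change (Gqk q k).Adj (vTr q k (treeRoot k)) (vTr q k x) ↔
      vTr q k x = vT q k ∨ ∃ a, vTr q k x = vTr q k (treeChild hk a)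
    rw [adj_vTr_vTr]
    simp [vTr, vT, TreeVert.ext_iff]

theorem reachable_root_vTr :
    ∀ (l : List (Fin 10)) (hl : l.length ≤ k),
      (Gqk q k).Reachable (vTr q k (treeRoot k)) (vTr q k ⟨l, hl⟩)
  | [], _ => .rfl
  | a :: l, hl =>
    (reachable_root_vTr l (Nat.le_of_succ_le hl)).trans (adj_vTr_vTr.2 (Or.inr ⟨a, rfl⟩)).reachable

theorem connected : (Gqk q k).Connected := by
  refine (SimpleGraph.connected_iff_exists_forall_reachable _).2 ⟨vT q k, ?_⟩
  rintro ((i | i) | ⟨l, hl⟩)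
  · fin_cases i
    · exact ((adj_vT_iff _).2 (Or.inl rfl)).reachable
    · exact .rfl
  · exact ((adj_vT_iff _).2 (Or.inr (Or.inr ⟨i, rfl⟩))).reachable
  · exact ((adj_vT_iff _).2 (Or.inr (Or.inl rfl))).reachable.trans (reachable_root_vTr l hl)

theorem vP_injective : Function.Injective (vP q k) := fun i j h => by simpa [vP] using h

theorem vTr_treeChild_injective (hk : 1 ≤ k) :
    Function.Injective fun a => vTr q k (treeChild hk a) := fun a b h => by
  simpa using congrArg Subtype.val (Sum.inr_injective h)

open Classical in
theorem neighborFinset_vT : (Gqk q k).neighborFinset (vT q k) =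
    insert (vS q k) (insert (vTr q k (treeRoot k)) (univ.map ⟨vP q k, vP_injective⟩)) := by
  ext x
  simp [adj_vT_iff, eq_comm]

open Classical in
theorem neighborFinset_root (hk : 1 ≤ k) : (Gqk q k).neighborFinset (vTr q k (treeRoot k)) =
    insert (vT q k) (univ.map ⟨_, vTr_treeChild_injective hk⟩) := by
  ext x
  simp [adj_root_iff hk, eq_comm]

noncomputable def bridgePotential : GVert q k → ℝ
  | Sum.inl (Sum.inl i) => if i = 0 then 3 else 2
  | Sum.inl (Sum.inr _) => 3
  | Sum.inr x => if x = treeRoot k then 1 else 0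

theorem abs_bridgePotential_sub_le_one {x y : GVert q k} (h : gadjBase q k x y) :
    |bridgePotential x - bridgePotential y| ≤ 1 := by
  rcases h with ⟨rfl, rfl⟩ | ⟨i, rfl, rfl | rfl⟩ | ⟨rfl, rfl⟩ | ⟨u, v, rfl, rfl, a, huv⟩
  case inr.inr.inr =>
    have hu : u ≠ treeRoot k := fun h => by simp [h] at huv
    simp only [bridgePotential, vTr, if_neg hu]
    split_ifs <;> norm_num
  all_goals norm_num [bridgePotential, vS, vT, vP, vTr]

theorem bridgePotential_sub_le_one_of_adj ⦃x y : GVert q k⦄ (h : (Gqk q k).Adj x y) :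
    bridgePotential x - bridgePotential y ≤ 1 := by
  rcases ((SimpleGraph.fromRel_adj _ _ _).1 h).2 with h | h
  · exact le_of_abs_le (abs_bridgePotential_sub_le_one h)
  · exact le_of_abs_le ((abs_sub_comm _ _).trans_le (abs_bridgePotential_sub_le_one h))

open Classical in
theorem sum_bridgePotential_mul_Pdist_vT :
    ∑ w, bridgePotential w * Pdist (Gqk q k) (vT q k) w = (3 * q + 6) / (q + 3) := by
  rw [sum_mul_Pdist, ← SimpleGraph.card_neighborFinset_eq_degree, neighborFinset_vT,
    sum_insert (by simp [vS, vTr, vP]), sum_insert (by simp [vTr, vP]), sum_map,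
    card_insert_of_notMem (by simp [vS, vTr, vP]), card_insert_of_notMem (by simp [vTr, vP]),
    card_map]
  simp only [bridgePotential, vS, vT, vP, vTr, Function.Embedding.coeFn_mk, Fin.isValue,
    one_ne_zero, if_true, if_false, sum_const, card_univ, Fintype.card_fin, nsmul_eq_mul]
  push_cast
  ring

open Classical in
theorem sum_bridgePotential_mul_Pdist_root (hk : 1 ≤ k) :
    ∑ w, bridgePotential w * Pdist (Gqk q k) (vTr q k (treeRoot k)) w = 1 / 4 := by
  rw [sum_mul_Pdist, ← SimpleGraph.card_neighborFinset_eq_degree, neighborFinset_root hk,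
    sum_insert (by simp [vT, vTr]), sum_map, card_insert_of_notMem (by simp [vT, vTr]), card_map]
  norm_num [bridgePotential, vT, vTr, TreeVert.ext_iff]

end Gqk

theorem bridge_edge_curvature_general (q k : ℕ) (hk : 1 ≤ k) :
    5 / 4 + (3 / 2) * (((q : ℝ) + 1) / ((q : ℝ) + 3))
      ≤ EMD (gdist (Gqk q k)) (Pdist (Gqk q k) (vT q k))
          (Pdist (Gqk q k) (vTr q k (treeRoot k))) ∧
    ricci (Gqk q k) (vT q k) (vTr q k (treeRoot k))
      ≤ -(1 / 4) - (3 / 2) * (((q : ℝ) + 1) / ((q : ℝ) + 3)) := by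
  have hEMD := Gqk.connected.sum_mul_Pdist_sub_le_EMD Gqk.bridgePotential_sub_le_one_of_adj
    (vT q k) (vTr q k (treeRoot k))
  rw [Gqk.sum_bridgePotential_mul_Pdist_vT, Gqk.sum_bridgePotential_mul_Pdist_root hk] at hEMD
  have hbound : 5 / 4 + (3 / 2) * (((q : ℝ) + 1) / ((q : ℝ) + 3))
      = (3 * q + 6) / (q + 3) - 1 / 4 := by
    field_simp
    ring
  rw [ricci]
  constructor <;> linarith

/-- In the graph `G_{q,k}` (`q ≥ 1`, `k ≥ 1`), the bridge edge
`{t, r_1}` satisfies `EMD(P_t, P_{r_1}) ≥ 5/4 + (3/2)·(q+1)/(q+3)`, and consequently its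
Ollivier–Ricci curvature satisfies `C_{G_{q,k}}({t,r_1}) ≤ −1/4 − (3/2)·(q+1)/(q+3)`. -/
theorem bridge_edge_curvature (q k : ℕ) (hq : 1 ≤ q) (hk : 1 ≤ k) :
    5 / 4 + (3 / 2) * (((q : ℝ) + 1) / ((q : ℝ) + 3))
      ≤ EMD (gdist (Gqk q k)) (Pdist (Gqk q k) (vT q k))
          (Pdist (Gqk q k) (vTr q k (treeRoot k))) ∧
    ricci (Gqk q k) (vT q k) (vTr q k (treeRoot k))
      ≤ -(1 / 4) - (3 / 2) * (((q : ℝ) + 1) / ((q : ℝ) + 3)) :=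
  bridge_edge_curvature_general q k hk
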